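/- Let Q be a k-generalized path Kronecker quiver with k ≥ 2: Q has two distinguished vertices i and j, and Q is the union of m nontrivial cycle-free paths from i to j and m' nontrivial cycle-free paths from j to i with m + m' = k, where these paths are pairwise arrow-disjoint, their internal vertices are pairwise distinct and different from i and j, and Q has no vertices or arrows other than those occurring on these paths. Then for every n ≥ 1 there exists a point W ∈ F•Rep(Q,β), β = (n, …, n), whose stabilizer in 𝕌 is trivial: if (u_v)_{v∈Q₀} ∈ 𝕌 satisfies u_{h(a)} · W(a) · u_{t(a)}⁻¹ = W(a) for every arrow a ∈ Q₁, then u_v = Iₙ for every vertex v. -/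

import Mathlib

/-- `UT n X` : `X` is an `n × n` upper triangular complex matrix (an element of 𝔟). -/
def UT (n : ℕ) (X : Matrix (Fin n) (Fin n) ℂ) : Prop :=
  ∀ i j : Fin n, (j : ℕ) < (i : ℕ) → X i j = 0

/-- `Unip n u` : `u` is a unipotent upper triangular matrix (an element of `U`). -/
def Unip (n : ℕ) (u : Matrix (Fin n) (Fin n) ℂ) : Prop :=
  UT n u ∧ ∀ i : Fin n, u i i = 1

/-- A finite quiver: finite vertex set `Q0`, finite arrow set `Q1`, head and tail maps. -/
structure FinQuiver where
  Q0 : Type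
  Q1 : Type
  [fin0 : Fintype Q0]
  [fin1 : Fintype Q1]
  [dec0 : DecidableEq Q0]
  h : Q1 → Q0
  t : Q1 → Q0

attribute [instance] FinQuiver.fin0 FinQuiver.fin1 FinQuiver.dec0

/-- Nontrivial cycle-free path from `v` to `w`: a nonempty list of composable arrows
starting at `v`, ending at `w`, and visiting no vertex twice. -/
def FinQuiver.IsCFPath (Q : FinQuiver) (L : List Q.Q1) (v w : Q.Q0) : Prop :=
  ∃ hne : L ≠ [],
    L.Chain' (fun a b => Q.h a = Q.t b) ∧
    Q.t (L.head hne) = v ∧ Q.h (L.getLast hne) = w ∧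
    (v :: L.map Q.h).Nodup

/-- The internal vertices of a path `L` from `v` to `w`: the heads of all arrows of `L`
except the last one. -/
def FinQuiver.internalVerts (Q : FinQuiver) (L : List Q.Q1) : List Q.Q0 :=
  (L.map Q.h).dropLast

/-!
Put `W(a₀) = diag(0, 1, …, n - 1)` on the last arrow `a₀` of one path and `W(a) = 1` on every
other arrow. A stabilizing family `u` then satisfies `u (h a) = u (t a)` for every `a ≠ a₀`, so it
is constant on the connected components of the quiver with `a₀` removed. That quiver is still
connected: a second path joins `i` and `j`, and every internal vertex is reached from the source
of its path without crossing `a₀`, which lies on no other path and ends its own. So `u` is a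
single unipotent matrix commuting with a diagonal matrix with distinct entries, hence `1`.
-/

open Matrix Relation

theorem Unip.isUnit_det {n : ℕ} {u : Matrix (Fin n) (Fin n) ℂ} (hu : Unip n u) :
    IsUnit u.det := by
  rw [det_of_isUpperTriangular fun a b hab => hu.1 a b hab]
  simp [hu.2]

theorem Matrix.mul_eq_mul_of_mul_mul_inv_eq {m : Type*} [Fintype m] [DecidableEq m]
    {R : Type*} [CommRing R] {A B C : Matrix m m R} (hB : IsUnit B.det)
    (h : A * C * B⁻¹ = C) : A * C = C * B := by
  calc A * C = A * C * B⁻¹ * B := (nonsing_inv_mul_cancel_right B (A * C) hB).symm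
    _ = C * B := by rw [h]

theorem Matrix.eq_one_of_commute_diagonal {ι R : Type*} [Fintype ι] [DecidableEq ι]
    [CommRing R] [NoZeroDivisors R] {u : Matrix ι ι R} {d : ι → R}
    (hd : Function.Injective d) (hdiag : ∀ p, u p p = 1) (h : Commute u (diagonal d)) :
    u = 1 := by
  ext p q
  by_cases hpq : p = q
  · subst hpq
    simp [hdiag]
  · have hpq' := congrFun (congrFun h.eq p) q
    simp only [mul_diagonal, diagonal_mul] at hpq'
    have hzero : u p q * (d q - d p) = 0 := by linear_combination hpq'
    rw [one_apply_ne hpq]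
    exact (mul_eq_zero.1 hzero).resolve_right (sub_ne_zero.2 fun h => hpq (hd h).symm)

namespace FinQuiver

variable (Q : FinQuiver)

def Adj (S : Set Q.Q1) (v w : Q.Q0) : Prop :=
  ∃ a ∈ S, Q.t a = v ∧ Q.h a = w

variable {Q} {S : Set Q.Q1}

theorem eq_of_eqvGen_adj {α : Type*} {f : Q.Q0 → α}
    (hf : ∀ a ∈ S, f (Q.t a) = f (Q.h a)) {v w : Q.Q0} (hvw : EqvGen (Q.Adj S) v w) :
    f v = f w :=
  congrArg (Quot.lift f fun _ _ ⟨a, ha, hv, hw⟩ => hv ▸ hw ▸ hf a ha) (Quot.eqvGen_sound hvw)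

theorem eqvGen_adj_tail_of_isChain (b : Q.Q1) (L : List Q.Q1)
    (hch : (b :: L).IsChain fun a c => Q.h a = Q.t c) (hS : ∀ a ∈ (b :: L).dropLast, a ∈ S) :
    ∀ a ∈ b :: L, EqvGen (Q.Adj S) (Q.t b) (Q.t a) := by
  induction L generalizing b with
  | nil => simp [EqvGen.refl]
  | cons c L ih =>
    obtain ⟨hbc, hch⟩ := List.isChain_cons_cons.1 hch
    have hbc : EqvGen (Q.Adj S) (Q.t b) (Q.t c) := EqvGen.rel _ _ ⟨b, hS b (by simp), rfl, hbc⟩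
    have ihc := ih c hch fun a ha => hS a (by simp [ha])
    rintro a (_ | ⟨_, ha⟩)
    · exact EqvGen.refl _
    · exact hbc.trans _ _ _ (ihc a ha)

theorem IsCFPath.eqvGen_adj_tail {L : List Q.Q1} {v w : Q.Q0}
    (hL : Q.IsCFPath L v w) (hS : ∀ a ∈ L.dropLast, a ∈ S) :
    ∀ a ∈ L, EqvGen (Q.Adj S) v (Q.t a) := by
  obtain ⟨hne, hch, hv, -⟩ := hL
  obtain ⟨b, L, rfl⟩ := List.exists_cons_of_ne_nil hne
  exact hv ▸ eqvGen_adj_tail_of_isChain b L hch hS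

theorem IsCFPath.eqvGen_adj_of_mem_internalVerts {L : List Q.Q1} {v w x : Q.Q0}
    (hL : Q.IsCFPath L v w) (hS : ∀ a ∈ L.dropLast, a ∈ S) (hx : x ∈ Q.internalVerts L) :
    EqvGen (Q.Adj S) v x := by
  rw [internalVerts, ← List.map_dropLast] at hx
  obtain ⟨a, ha, rfl⟩ := List.mem_map.1 hx
  exact (hL.eqvGen_adj_tail hS a (List.dropLast_subset _ ha)).trans _ _ _
    (EqvGen.rel _ _ ⟨a, hS a ha, rfl, rfl⟩)

theorem IsCFPath.eqvGen_adj {L : List Q.Q1} {v w : Q.Q0}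
    (hL : Q.IsCFPath L v w) (hS : ∀ a ∈ L, a ∈ S) : EqvGen (Q.Adj S) v w := by
  obtain ⟨hne, -, -, hw, -⟩ := id hL
  have hlast := List.getLast_mem hne
  exact (hL.eqvGen_adj_tail (fun a ha => hS a (List.dropLast_subset _ ha)) _ hlast).trans _ _ _
    (EqvGen.rel _ _ ⟨_, hS _ hlast, rfl, hw⟩)

theorem exists_eqvGen_adj_compl_singleton_of_paths {i j : Q.Q0} {PL : List (List Q.Q1)}
    (hPL : ∀ L ∈ PL, Q.IsCFPath L i j ∨ Q.IsCFPath L j i) (hnodup : PL.flatten.Nodup)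
    (hvert : ∀ x, x = i ∨ x = j ∨ ∃ L ∈ PL, x ∈ Q.internalVerts L) (hlen : 2 ≤ PL.length) :
    ∃ a₀, ∀ v, EqvGen (Q.Adj {a₀}ᶜ) i v := by
  obtain ⟨L₀, L₁, rest, rfl⟩ : ∃ L₀ L₁ rest, PL = L₀ :: L₁ :: rest := by
    match PL, hlen with
    | L₀ :: L₁ :: rest, _ => exact ⟨L₀, L₁, rest, rfl⟩
  have hne₁ : L₁ ≠ [] := by
    rcases hPL L₁ (by simp) with ⟨hne, -⟩ | ⟨hne, -⟩ <;> exact hne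
  set a₀ := L₁.getLast hne₁
  refine ⟨a₀, ?_⟩
  have ha₀ : a₀ ∉ L₀ ++ L₁.dropLast ++ rest.flatten := by
    rw [List.flatten_cons, List.flatten_cons, ← List.dropLast_append_getLast hne₁,
      List.append_assoc, List.singleton_append, ← List.append_assoc, List.nodup_middle,
      List.nodup_cons] at hnodup
    exact hnodup.1
  have hL₀ : ∀ a ∈ L₀, a ∈ ({a₀}ᶜ : Set Q.Q1) := by
    rintro a ha rfl
    exact ha₀ (by simp [ha])
  have hdrop : ∀ L ∈ L₀ :: L₁ :: rest, ∀ a ∈ L.dropLast, a ∈ ({a₀}ᶜ : Set Q.Q1) := by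
    rintro L hL a ha rfl
    rcases List.mem_cons.1 hL with rfl | hL
    · exact hL₀ _ (List.dropLast_subset _ ha) rfl
    rcases List.mem_cons.1 hL with rfl | hL
    · exact ha₀ (List.mem_append_left _ (List.mem_append_right _ ha))
    · exact ha₀ (List.mem_append_right _ (List.mem_flatten_of_mem hL (List.dropLast_subset _ ha)))
  have hij : EqvGen (Q.Adj {a₀}ᶜ) i j := by
    rcases hPL L₀ (by simp) with h | h
    · exact h.eqvGen_adj hL₀
    · exact EqvGen.symm _ _ (h.eqvGen_adj hL₀)
  intro v
  rcases hvert v with rfl | rfl | ⟨L, hL, hv⟩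
  · exact EqvGen.refl _
  · exact hij
  · rcases hPL L hL with h | h
    · exact h.eqvGen_adj_of_mem_internalVerts (hdrop L hL) hv
    · exact hij.trans _ _ _ (h.eqvGen_adj_of_mem_internalVerts (hdrop L hL) hv)

theorem exists_trivial_stabilizer_of_eqvGen_adj {a₀ : Q.Q1} {c : Q.Q0}
    (hconn : ∀ v, EqvGen (Q.Adj {a₀}ᶜ) c v) (n : ℕ) :
    ∃ W : Q.Q1 → Matrix (Fin n) (Fin n) ℂ,
      (∀ a : Q.Q1, UT n (W a)) ∧
      ∀ u : Q.Q0 → Matrix (Fin n) (Fin n) ℂ,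
        (∀ v : Q.Q0, Unip n (u v)) →
        (∀ a : Q.Q1, u (Q.h a) * W a * (u (Q.t a))⁻¹ = W a) →
        ∀ v : Q.Q0, u v = 1 := by
  classical
  let d : Fin n → ℂ := fun p => (p : ℕ)
  have hd : Function.Injective d := Nat.cast_injective.comp Fin.val_injective
  refine ⟨fun a => if a = a₀ then diagonal d else 1, fun a p q hqp => ?_, fun u hu hstab => ?_⟩
  · have hpq : p ≠ q := Fin.ne_of_gt hqp
    show (if a = a₀ then diagonal d else 1) p q = 0
    split_ifs <;> simp [hpq]
  have hcomm : ∀ a, u (Q.h a) * (if a = a₀ then diagonal d else 1) =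
      (if a = a₀ then diagonal d else 1) * u (Q.t a) := fun a =>
    mul_eq_mul_of_mul_mul_inv_eq (hu _).isUnit_det (hstab a)
  have hconst : ∀ v, u c = u v := fun v =>
    eq_of_eqvGen_adj (fun a (ha : a ≠ a₀) => by simpa [ha] using (hcomm a).symm) (hconn v)
  have hc : u c = 1 := by
    refine eq_one_of_commute_diagonal hd (hu c).2 ?_
    have h := hcomm a₀
    rwa [if_pos rfl, ← hconst (Q.h a₀), ← hconst (Q.t a₀)] at h
  intro v
  rw [← hconst v, hc]

end FinQuiver

theorem path_kronecker_point_with_trivial_stabilizer_general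
    (Q : FinQuiver) (i j : Q.Q0)
    (m m' k : ℕ) (hk : 2 ≤ k) (hmm : m + m' = k)
    (P : Fin m → List Q.Q1) (P' : Fin m' → List Q.Q1)
    (hP : ∀ r : Fin m, Q.IsCFPath (P r) i j)
    (hP' : ∀ r : Fin m', Q.IsCFPath (P' r) j i)
    -- the paths are pairwise arrow-disjoint (and each arrow occurs once on its path):
    (harrNodup : ((List.ofFn P).flatten ++ (List.ofFn P').flatten).Nodup)
    -- `Q` has no vertices other than `i`, `j` and the internal vertices of the paths:
    (hvertAll : ∀ x : Q.Q0, x = i ∨ x = j ∨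
        x ∈ (List.ofFn fun r => Q.internalVerts (P r)).flatten ++
          (List.ofFn fun r => Q.internalVerts (P' r)).flatten)
    (n : ℕ) :
    ∃ W : Q.Q1 → Matrix (Fin n) (Fin n) ℂ,
      (∀ a : Q.Q1, UT n (W a)) ∧
      ∀ u : Q.Q0 → Matrix (Fin n) (Fin n) ℂ,
        (∀ v : Q.Q0, Unip n (u v)) →
        (∀ a : Q.Q1, u (Q.h a) * W a * (u (Q.t a))⁻¹ = W a) →
        ∀ v : Q.Q0, u v = 1 := by
  have hPL : ∀ L ∈ List.ofFn P ++ List.ofFn P', Q.IsCFPath L i j ∨ Q.IsCFPath L j i := by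
    simp only [List.mem_append, List.mem_ofFn]
    rintro L (⟨r, rfl⟩ | ⟨r, rfl⟩)
    exacts [Or.inl (hP r), Or.inr (hP' r)]
  have hvert : ∀ x, x = i ∨ x = j ∨ ∃ L ∈ List.ofFn P ++ List.ofFn P', x ∈ Q.internalVerts L := by
    simpa [or_and_right, exists_or] using hvertAll
  obtain ⟨a₀, hconn⟩ := Q.exists_eqvGen_adj_compl_singleton_of_paths hPL
    (by rwa [List.flatten_append]) hvert (by simp [hmm, hk])
  exact Q.exists_trivial_stabilizer_of_eqvGen_adj hconn n

/-- **Proposition 3.3.** Let `Q` be a `k`-generalized path Kronecker quiver with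
`k = m + m' ≥ 2`: its two distinguished vertices are `i` and `j`, it is the union of `m`
nontrivial cycle-free paths `P r : i → j` and `m'` nontrivial cycle-free paths
`P' r : j → i` which are pairwise arrow-disjoint, whose internal vertices are pairwise
distinct and different from `i` and `j`, and `Q` has no vertices or arrows besides those on
the paths. Then for every `n ≥ 1` there is a point `W` of the complete filtered
representation space `F•Rep(Q, (n,…,n))` whose stabilizer in `𝕌 = U^{Q₀}` is trivial. -/
theorem path_kronecker_point_with_trivial_stabilizer
    (Q : FinQuiver) (i j : Q.Q0) (hij : i ≠ j)
    (m m' k : ℕ) (hk : 2 ≤ k) (hmm : m + m' = k)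
    (P : Fin m → List Q.Q1) (P' : Fin m' → List Q.Q1)
    (hP : ∀ r : Fin m, Q.IsCFPath (P r) i j)
    (hP' : ∀ r : Fin m', Q.IsCFPath (P' r) j i)
    -- the paths are pairwise arrow-disjoint (and each arrow occurs once on its path):
    (harrNodup : ((List.ofFn P).flatten ++ (List.ofFn P').flatten).Nodup)
    -- `Q` has no arrows other than those occurring on the paths:
    (harrAll : ∀ a : Q.Q1, a ∈ (List.ofFn P).flatten ++ (List.ofFn P').flatten)
    -- the internal vertices of the paths are pairwise distinct:
    (hintNodup : ((List.ofFn fun r => Q.internalVerts (P r)).flatten ++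
        (List.ofFn fun r => Q.internalVerts (P' r)).flatten).Nodup)
    -- the internal vertices are different from `i` and `j`:
    (hinti : i ∉ (List.ofFn fun r => Q.internalVerts (P r)).flatten ++
        (List.ofFn fun r => Q.internalVerts (P' r)).flatten)
    (hintj : j ∉ (List.ofFn fun r => Q.internalVerts (P r)).flatten ++
        (List.ofFn fun r => Q.internalVerts (P' r)).flatten)
    -- `Q` has no vertices other than `i`, `j` and the internal vertices of the paths:
    (hvertAll : ∀ x : Q.Q0, x = i ∨ x = j ∨
        x ∈ (List.ofFn fun r => Q.internalVerts (P r)).flatten ++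
          (List.ofFn fun r => Q.internalVerts (P' r)).flatten)
    (n : ℕ) (hn : 1 ≤ n) :
    ∃ W : Q.Q1 → Matrix (Fin n) (Fin n) ℂ,
      (∀ a : Q.Q1, UT n (W a)) ∧
      ∀ u : Q.Q0 → Matrix (Fin n) (Fin n) ℂ,
        (∀ v : Q.Q0, Unip n (u v)) →
        (∀ a : Q.Q1, u (Q.h a) * W a * (u (Q.t a))⁻¹ = W a) →
        ∀ v : Q.Q0, u v = 1 :=
  path_kronecker_point_with_trivial_stabilizer_general Q i j m m' k hk hmm P P' hP hP' harrNodup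
    hvertAll n
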